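/- Let n ≥ 5 and let α, β be semigroup endomorphisms of T_n. Then α and β are Green's L-related, i.e. there exist semigroup endomorphisms γ, δ of T_n with α = γ·β and β = δ·α, if and only if α = β or both α and β are bijective (as maps T_n → T_n). -/

import Mathlib

/-- `s : Fin n → Fin n` is an odd permutation if it is the underlying function of some
permutation of sign `-1`. -/
def IsOddPerm {n : ℕ} (s : Fin n → Fin n) : Prop :=
  ∃ σ : Equiv.Perm (Fin n), Equiv.Perm.sign σ = -1 ∧ ⇑σ = s

/-- `s : Fin n → Fin n` is an even permutation if it is the underlying function of some
permutation of sign `1`. -/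
def IsEvenPerm {n : ℕ} (s : Fin n → Fin n) : Prop :=
  ∃ σ : Equiv.Perm (Fin n), Equiv.Perm.sign σ = 1 ∧ ⇑σ = s

/-- A pair `(t, e)` of elements of `T_n` is permissible if `t ∘ t ∘ t = t` and
`t ∘ e = e ∘ t = e ∘ e = e`. -/
def Permissible {n : ℕ} (t e : Fin n → Fin n) : Prop :=
  t ∘ t ∘ t = t ∧ t ∘ e = e ∧ e ∘ t = e ∧ e ∘ e = e

open Classical in
/-- For a (permissible) pair `(t, e)`, the map `φ_{t,e} : T_n → T_n` sending `s` to `t` if `s`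
is an odd permutation, to `t ∘ t` if `s` is an even permutation, and to `e` if `s` is not
bijective. -/
noncomputable def phi {n : ℕ} (t e : Fin n → Fin n) : (Fin n → Fin n) → (Fin n → Fin n) :=
  fun s => if IsOddPerm s then t else if IsEvenPerm s then t ∘ t else e

/-- `φ : T_n → T_n` is a semigroup endomorphism of `T_n` if `φ (s ∘ s') = φ s ∘ φ s'`
for all `s, s'`. -/
def IsEndo {n : ℕ} (φ : (Fin n → Fin n) → (Fin n → Fin n)) : Prop :=
  ∀ s s' : Fin n → Fin n, φ (s ∘ s') = φ s ∘ φ s'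

/-!
If an endomorphism `φ` of `T_n` is not injective it identifies all constant maps. Then it is not
injective on `S_n` either: otherwise `S_n` would act faithfully by permutations on the range of the
idempotent `φ id` while fixing a point of it, and `n! ≤ (n-1)!`. So `{σ | φ σ = φ id}` is a
nontrivial normal subgroup of `S_n`, which contains `A_n` for `n ≥ 5`: `φ` only sees the parity
of a permutation. Composing with a 3-cycle shows that merging two values of a non-surjective
map does not change its value under `φ`, so `φ` is constant on non-bijective maps. Thus
`φ = phi t e` for a permissible pair, and `(t, e)` can be read off the range `{t, t ∘ t, e}`.

If `α = γ·β` and `β = δ·α`, then `α` and `β` have the same range, so they coincide when they are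
not injective; if one of them is injective, both are bijective by finiteness.
-/

open Function Equiv

section GroupToTransformations

variable {G α : Type*} [Group G]

def fiberSubgroup (f : G → α → α) (hf : ∀ g h, f (g * h) = f g ∘ f h) : Subgroup G where
  carrier := {g | f g = f 1}
  one_mem' := rfl
  mul_mem' {g h} (hg : f g = f 1) (hh : f h = f 1) :=
    show f (g * h) = f 1 by rw [hf, hg, hh, ← hf, one_mul]
  inv_mem' {g} hg := by
    have hinv := hf g⁻¹ g
    rw [inv_mul_cancel, hg, ← hf, mul_one] at hinv
    exact hinv.symm

lemma apply_eq_apply_iff_inv_mul_mem_fiberSubgroup {f : G → α → α}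
    (hf : ∀ g h, f (g * h) = f g ∘ f h) {g h : G} :
    f g = f h ↔ g⁻¹ * h ∈ fiberSubgroup f hf := by
  change _ ↔ f (g⁻¹ * h) = f 1
  constructor
  · intro hgh
    rw [hf, ← hgh, ← hf, inv_mul_cancel]
  · intro hgh
    rw [← mul_inv_cancel_left g h, hf, hgh, ← hf, mul_one]

lemma fiberSubgroup_normal {f : G → α → α} (hf : ∀ g h, f (g * h) = f g ∘ f h) :
    (fiberSubgroup f hf).Normal where
  conj_mem g (hg : f g = f 1) h :=
    show f (h * g * h⁻¹) = f 1 by rw [hf, hf, hg, ← hf, ← hf, mul_one, mul_inv_cancel]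

/-- A group acting faithfully by (not necessarily invertible) transformations of `α` acts by
permutations on the range of the idempotent `f 1`; a common fixed point `p` lies in that range,
so the group embeds into the injective self-maps of `range (f 1) \ {p}`. -/
theorem card_le_factorial_of_injective_of_apply_eq_self [Fintype G] [Fintype α] [DecidableEq α]
    {f : G → α → α} (hf : ∀ g h, f (g * h) = f g ∘ f h) (hinj : Injective f) {p : α}
    (hp : ∀ g, f g p = p) : Fintype.card G ≤ (Fintype.card α - 1).factorial := by
  have hunit : ∀ g x, f 1 (f g x) = f g x ∧ f g (f 1 x) = f g x := fun g x =>
    ⟨by rw [← comp_apply (f := f 1), ← hf, one_mul],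
      by rw [← comp_apply (f := f g), ← hf, mul_one]⟩
  have hinv : ∀ g x, f g⁻¹ (f g x) = f 1 x := fun g x => by
    rw [← comp_apply (f := f g⁻¹), ← hf, inv_mul_cancel]
  let A : Finset α := (Finset.univ.image (f 1)).erase p
  have hA : ∀ x ∈ A, f 1 x = x := by
    intro x hx
    obtain ⟨y, -, rfl⟩ := Finset.mem_image.mp (Finset.mem_of_mem_erase hx)
    exact (hunit 1 y).1
  have hmaps : ∀ g, ∀ x ∈ A, f g x ∈ A := by
    intro g x hx
    refine Finset.mem_erase.mpr ⟨fun hgx => Finset.ne_of_mem_erase hx ?_,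
      Finset.mem_image.mpr ⟨f g x, Finset.mem_univ _, (hunit g x).1⟩⟩
    rw [← hA x hx, ← hinv g, hgx, hp]
  have hinjOn : ∀ g, ∀ x ∈ A, ∀ y ∈ A, f g x = f g y → x = y := by
    intro g x hx y hy hxy
    rw [← hA x hx, ← hA y hy, ← hinv g, hxy, hinv]
  let r : G → (A ↪ A) := fun g =>
    ⟨fun x => ⟨f g x, hmaps g x x.2⟩, fun x y hxy =>
      Subtype.ext (hinjOn g x x.2 y y.2 (congrArg Subtype.val hxy))⟩
  have hr : Injective r := by
    intro g h hgh
    refine hinj (funext fun x => ?_)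
    rw [← (hunit g x).2, ← (hunit h x).2]
    by_cases hx : f 1 x = p
    · rw [hx, hp, hp]
    · have hxA : f 1 x ∈ A :=
        Finset.mem_erase.mpr ⟨hx, Finset.mem_image_of_mem _ (Finset.mem_univ x)⟩
      exact congrArg Subtype.val (DFunLike.congr_fun hgh ⟨f 1 x, hxA⟩)
  have hcardA : A.card ≤ Fintype.card α - 1 := by
    rw [← Finset.card_univ, ← Finset.card_erase_of_mem (Finset.mem_univ p)]
    exact Finset.card_le_card (Finset.erase_subset_erase p (Finset.subset_univ _))
  calc Fintype.card G ≤ Fintype.card (A ↪ A) := Fintype.card_le_of_injective r hr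
    _ = A.card.factorial := by simp [Fintype.card_embedding_eq, Nat.descFactorial_self]
    _ ≤ (Fintype.card α - 1).factorial := Nat.factorial_le hcardA

end GroupToTransformations

theorem Equiv.Perm.apply_eq_apply_of_sign_eq {X Y : Type*} [Fintype X] [DecidableEq X]
    (hX : 5 ≤ Nat.card X) {f : Perm X → Y → Y} (hf : ∀ σ τ, f (σ * τ) = f σ ∘ f τ)
    (hni : ¬ Injective f) {σ τ : Perm X} (h : sign σ = sign τ) : f σ = f τ := by
  have := fiberSubgroup_normal hf
  have hnt : Nontrivial (fiberSubgroup f hf) := by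
    obtain ⟨g₁, g₂, hg, hne⟩ := not_injective_iff.mp hni
    refine (Subgroup.nontrivial_iff_ne_bot _).mpr fun hbot => hne ?_
    rwa [apply_eq_apply_iff_inv_mul_mem_fiberSubgroup hf, hbot, Subgroup.mem_bot,
      inv_mul_eq_one] at hg
  rw [apply_eq_apply_iff_inv_mul_mem_fiberSubgroup hf]
  refine alternatingGroup_le_of_normal hX hnt (mem_alternatingGroup.mpr ?_)
  rw [map_mul, map_inv, h, inv_mul_cancel]

section Phi

variable {n : ℕ}

lemma IsOddPerm.bijective {s : Fin n → Fin n} (h : IsOddPerm s) : Bijective s := by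
  obtain ⟨σ, -, rfl⟩ := h
  exact σ.bijective

lemma IsEvenPerm.bijective {s : Fin n → Fin n} (h : IsEvenPerm s) : Bijective s := by
  obtain ⟨σ, -, rfl⟩ := h
  exact σ.bijective

lemma IsOddPerm.not_isEvenPerm {s : Fin n → Fin n} (h : IsOddPerm s) : ¬ IsEvenPerm s := by
  rintro ⟨τ, hτ, rfl⟩
  obtain ⟨σ, hσ, hστ⟩ := h
  rw [coe_fn_injective hστ, hτ] at hσ
  exact absurd hσ (by decide)

lemma isOddPerm_or_isEvenPerm_or_not_bijective (s : Fin n → Fin n) :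
    IsOddPerm s ∨ IsEvenPerm s ∨ ¬ Bijective s := by
  by_cases hs : Bijective s
  · rcases Int.units_eq_one_or (Perm.sign (ofBijective s hs)) with h | h
    · exact Or.inr (Or.inl ⟨ofBijective s hs, h, rfl⟩)
    · exact Or.inl ⟨ofBijective s hs, h, rfl⟩
  · exact Or.inr (Or.inr hs)

variable (t e : Fin n → Fin n)

lemma phi_of_isOddPerm {s : Fin n → Fin n} (h : IsOddPerm s) : phi t e s = t :=
  if_pos h

lemma phi_of_isEvenPerm {s : Fin n → Fin n} (h : IsEvenPerm s) : phi t e s = t ∘ t := by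
  rw [phi, if_neg fun h' => h'.not_isEvenPerm h, if_pos h]

lemma phi_of_not_bijective {s : Fin n → Fin n} (h : ¬ Bijective s) : phi t e s = e := by
  rw [phi, if_neg fun h' => h h'.bijective, if_neg fun h' => h h'.bijective]

lemma range_phi (hn : 2 ≤ n) : Set.range (phi t e) = {t, t ∘ t, e} := by
  have : Nontrivial (Fin n) := Fin.nontrivial_iff_two_le.mpr hn
  obtain ⟨a, b, hab⟩ := exists_pair_ne (Fin n)
  refine subset_antisymm ?_ ?_
  · rintro _ ⟨s, rfl⟩
    rcases isOddPerm_or_isEvenPerm_or_not_bijective s with h | h | h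
    · simp [phi_of_isOddPerm t e h]
    · simp [phi_of_isEvenPerm t e h]
    · simp [phi_of_not_bijective t e h]
  · have hodd : IsOddPerm (swap a b) := ⟨swap a b, Perm.sign_swap hab, rfl⟩
    have heven : IsEvenPerm (id : Fin n → Fin n) := ⟨1, map_one _, rfl⟩
    have hconst : ¬ Bijective (fun _ : Fin n => a) := fun h => hab (h.1 rfl)
    rintro _ (rfl | rfl | rfl)
    exacts [⟨_, phi_of_isOddPerm _ e hodd⟩, ⟨_, phi_of_isEvenPerm _ e heven⟩,
      ⟨_, phi_of_not_bijective t _ hconst⟩]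

variable {t e}

lemma permissible_of_isEndo_phi (hn : 2 ≤ n) (h : IsEndo (phi t e)) : Permissible t e := by
  have : Nontrivial (Fin n) := Fin.nontrivial_iff_two_le.mpr hn
  obtain ⟨a, b, hab⟩ := exists_pair_ne (Fin n)
  have hodd : IsOddPerm (swap a b) := ⟨swap a b, Perm.sign_swap hab, rfl⟩
  have hconst : ∀ s : Fin n → Fin n, ¬ Bijective (fun _ : Fin n => s a) := fun s h => hab (h.1 rfl)
  have ht : phi t e (swap a b) = t := phi_of_isOddPerm t e hodd
  have he : phi t e (fun _ => a) = e := phi_of_not_bijective t e (hconst id)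
  refine ⟨?_, ?_, ?_, ?_⟩
  · calc t ∘ t ∘ t = phi t e (swap a b ∘ swap a b ∘ swap a b) := by rw [h, h, ht]
      _ = t := phi_of_isOddPerm t e
          ⟨swap a b * swap a b * swap a b, by simp [Perm.sign_swap hab], rfl⟩
  · calc t ∘ e = phi t e (swap a b ∘ fun _ => a) := by rw [h, ht, he]
      _ = e := phi_of_not_bijective t e (hconst (swap a b))
  · calc e ∘ t = phi t e ((fun _ => a) ∘ swap a b) := by rw [h, ht, he]
      _ = e := phi_of_not_bijective t e (hconst id)
  · calc e ∘ e = phi t e ((fun _ => a) ∘ fun _ => a) := by rw [h, he]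
      _ = e := phi_of_not_bijective t e (hconst id)

/-- `e` is a zero of `{t, t ∘ t, e}` and a zero is unique, so `e = E`; then `t = T` is a case
check. -/
lemma Permissible.eq_and_eq_of_insert_eq {T E : Fin n → Fin n} (h : Permissible t e)
    (h' : Permissible T E) (hS : ({t, t ∘ t, e} : Set (Fin n → Fin n)) = {T, T ∘ T, E}) :
    t = T ∧ e = E := by
  obtain ⟨ht, hte, het, he⟩ := h
  obtain ⟨hT, hTE, hET, hE⟩ := h'
  have hmem : ∀ x ∈ ({T, T ∘ T, E} : Set (Fin n → Fin n)), x ∈ ({t, t ∘ t, e} : Set _) := by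
    simp [hS]
  have hmem' : ∀ x ∈ ({t, t ∘ t, e} : Set (Fin n → Fin n)), x ∈ ({T, T ∘ T, E} : Set _) := by
    simp [hS]
  have heE : e = E := by
    calc e = e ∘ E := by
          rcases hmem E (by simp) with h | h | h <;> rw [h] <;> simp_all [← comp_assoc]
      _ = E := by
          rcases hmem' e (by simp) with h | h | h <;> rw [h] <;> simp_all [comp_assoc]
  subst heE
  refine ⟨?_, rfl⟩
  rcases hmem' t (by simp) with h1 | h1 | h1
  · exact h1
  · rcases hmem T (by simp) with h2 | h2 | h2
    · exact h2.symm
    · calc t = T ∘ T := h1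
        _ = t ∘ (t ∘ t ∘ t) := by rw [h2]; rfl
        _ = T := by rw [ht, h2]
    · rw [h1, h2, he]
  · rcases hmem T (by simp) with h2 | h2 | h2
    · exact h2.symm
    · rw [h2, h1, he]
    · rw [h1, h2]

end Phi

lemma update_id_swap_mul_swap {X : Type*} [DecidableEq X] {a b z x : X} (hab : a ≠ b)
    (haz : a ≠ z) (hbz : b ≠ z) (hx : x ≠ z) :
    update id z a ((swap a b * swap a z) x) = update id b a x := by
  rw [Perm.mul_apply]
  by_cases hxa : x = a
  · subst hxa
    simp [swap_apply_of_ne_of_ne haz.symm hbz.symm, hab]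
  by_cases hxb : x = b
  · subst hxb
    simp [swap_apply_of_ne_of_ne hab.symm hx, haz]
  · simp [swap_apply_of_ne_of_ne hxa hx, swap_apply_of_ne_of_ne hxa hxb, hx, hxb]

namespace IsEndo

variable {n : ℕ} {φ : (Fin n → Fin n) → (Fin n → Fin n)}

lemma comp {ψ : (Fin n → Fin n) → (Fin n → Fin n)} (hψ : IsEndo ψ) (hφ : IsEndo φ) :
    IsEndo (ψ ∘ φ) := fun s s' => by
  rw [comp_apply, hφ, hψ]
  rfl

lemma ofBijective_symm (hφ : IsEndo φ) (hb : Bijective φ) : IsEndo (ofBijective φ hb).symm :=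
  fun s s' => (ofBijective φ hb).injective <| by
    have hφ_symm (x) : φ ((ofBijective φ hb).symm x) = x := (ofBijective φ hb).apply_symm_apply x
    rw [ofBijective_apply, ofBijective_apply, hφ, hφ_symm, hφ_symm, hφ_symm]

lemma apply_const_eq_apply_const (hφ : IsEndo φ) (hni : ¬ Injective φ) (u v : Fin n) :
    φ (fun _ => u) = φ (fun _ => v) := by
  obtain ⟨a, b, hab, hne⟩ := not_injective_iff.mp hni
  obtain ⟨p, hp⟩ := ne_iff.mp hne
  let g : Fin n → Fin n := fun x => if x = a p then u else v
  calc φ (fun _ => u) = φ (g ∘ a ∘ fun _ => p) := by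
        congr 1
        funext
        simp [g]
    _ = φ (g ∘ b ∘ fun _ => p) := by rw [hφ, hφ, hab, ← hφ b, ← hφ]
    _ = φ (fun _ => v) := by
        congr 1
        funext
        simp [g, hp.symm]

lemma apply_comp_apply_const (hφ : IsEndo φ) (hni : ¬ Injective φ) (s : Fin n → Fin n)
    (u : Fin n) : φ s ∘ φ (fun _ => u) = φ (fun _ => u) := by
  rw [← hφ]
  exact hφ.apply_const_eq_apply_const hni _ _

lemma apply_perm_mul (hφ : IsEndo φ) (σ τ : Perm (Fin n)) : φ ⇑(σ * τ) = φ σ ∘ φ τ :=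
  hφ σ τ

lemma not_injective_perm (hn : 2 ≤ n) (hφ : IsEndo φ) (hni : ¬ Injective φ) :
    ¬ Injective fun σ : Perm (Fin n) => φ σ := by
  intro hinj
  obtain ⟨a⟩ : Nonempty (Fin n) := ⟨⟨0, by omega⟩⟩
  have hcard := card_le_factorial_of_injective_of_apply_eq_self hφ.apply_perm_mul hinj
    (p := φ (fun _ => a) a) fun σ => congrFun (hφ.apply_comp_apply_const hni σ a) a
  rw [Fintype.card_perm, Fintype.card_fin] at hcard
  exact absurd hcard (not_le.mpr ((Nat.factorial_lt (by omega)).mpr (by omega)))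

lemma apply_perm_eq_of_sign_eq (hn : 5 ≤ n) (hφ : IsEndo φ) (hni : ¬ Injective φ)
    {σ τ : Perm (Fin n)} (h : Perm.sign σ = Perm.sign τ) : φ σ = φ τ :=
  Perm.apply_eq_apply_of_sign_eq (by simpa using hn) hφ.apply_perm_mul
    (hφ.not_injective_perm (by omega) hni) h

/-- Merging the value `b` of `s` into another value `a` does not change `φ s`: when some `z` is
missed by `s`, the merge is a retraction onto `range s` after a 3-cycle, and even permutations
act on `φ s` as `φ id`. -/
lemma apply_update_comp (hn : 5 ≤ n) (hφ : IsEndo φ) (hni : ¬ Injective φ) {s : Fin n → Fin n}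
    {a b z : Fin n} (hab : a ≠ b) (ha : a ∈ Set.range s) (hb : b ∈ Set.range s)
    (hz : z ∉ Set.range s) : φ (update id b a ∘ s) = φ s := by
  have hzs : update id z a ∘ s = s := funext fun x => update_of_ne (fun h => hz ⟨x, h⟩) _ _
  have hsign : Perm.sign (swap a b * swap a z) = Perm.sign (1 : Perm (Fin n)) := by
    rw [map_mul, Perm.sign_swap hab, Perm.sign_swap (ne_of_mem_of_not_mem ha hz), map_one]
    decide
  calc φ (update id b a ∘ s) = φ (update id z a ∘ ⇑(swap a b * swap a z) ∘ s) := by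
        congr 1
        funext x
        exact (update_id_swap_mul_swap hab (ne_of_mem_of_not_mem ha hz)
          (ne_of_mem_of_not_mem hb hz) fun h => hz ⟨x, h⟩).symm
    _ = φ (update id z a ∘ id ∘ s) := by
        rw [hφ, hφ, hφ.apply_perm_eq_of_sign_eq hn hni hsign, ← hφ, ← hφ]
        rfl
    _ = φ s := by rw [id_comp, hzs]

lemma apply_eq_apply_const_of_not_surjective (hn : 5 ≤ n) (hφ : IsEndo φ)
    (hni : ¬ Injective φ) {s : Fin n → Fin n} (hs : ¬ Surjective s) (u : Fin n) :
    φ s = φ (fun _ => u) := by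
  induction h : (Finset.univ.image s).card using Nat.strong_induction_on generalizing s with
  | _ k ih =>
    obtain ⟨z, hz⟩ : ∃ z, z ∉ Set.range s := by simpa [Surjective] using hs
    by_cases hconst : ∃ x y, s x ≠ s y
    · obtain ⟨x, y, hxy⟩ := hconst
      have hsub : Finset.univ.image (update id (s y) (s x) ∘ s) ⊆
        (Finset.univ.image s).erase (s y) := by
        intro c hc
        obtain ⟨w, -, rfl⟩ := Finset.mem_image.mp hc
        by_cases hw : s w = s y <;> simp [hw, hxy]
      rw [← hφ.apply_update_comp hn hni hxy ⟨x, rfl⟩ ⟨y, rfl⟩ hz]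
      refine ih _ ?_ ?_ rfl
      · calc _ ≤ ((Finset.univ.image s).erase (s y)).card := Finset.card_le_card hsub
          _ < k := h ▸ Finset.card_erase_lt_of_mem (Finset.mem_image_of_mem _ (Finset.mem_univ y))
      · intro hsurj
        obtain ⟨w, hw⟩ := hsurj z
        by_cases hwy : s w = s y
        · exact hz ⟨x, by simpa [hwy] using hw⟩
        · exact hz ⟨w, by simpa [hwy] using hw⟩
    · push Not at hconst
      rw [show s = fun _ => s u from funext fun x => hconst x u]
      exact hφ.apply_const_eq_apply_const hni _ _

lemma exists_permissible_eq_phi (hn : 5 ≤ n) (hφ : IsEndo φ) (hni : ¬ Injective φ) :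
    ∃ t e, Permissible t e ∧ φ = phi t e := by
  obtain ⟨a, b, hab⟩ : ∃ a b : Fin n, a ≠ b :=
    ⟨⟨0, by omega⟩, ⟨1, by omega⟩, by simp [Fin.ext_iff]⟩
  have hφ_eq : φ = phi (φ (swap a b)) (φ fun _ => a) := by
    funext s
    rcases isOddPerm_or_isEvenPerm_or_not_bijective s with h | h | h
    · rw [phi_of_isOddPerm _ _ h]
      obtain ⟨σ, hσ, rfl⟩ := h
      exact hφ.apply_perm_eq_of_sign_eq hn hni (hσ.trans (Perm.sign_swap hab).symm)
    · rw [phi_of_isEvenPerm _ _ h, ← hφ]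
      obtain ⟨σ, hσ, rfl⟩ := h
      exact hφ.apply_perm_eq_of_sign_eq hn hni (σ := σ) (τ := swap a b * swap a b) (by simp [hσ])
    · rw [phi_of_not_bijective _ _ h]
      exact hφ.apply_eq_apply_const_of_not_surjective hn hni
        (fun hs => h (Finite.surjective_iff_bijective.mp hs)) a
  exact ⟨_, _, permissible_of_isEndo_phi (by omega) (hφ_eq ▸ hφ), hφ_eq⟩

end IsEndo

lemma Function.Injective.of_eq_comp_of_eq_comp {X : Type*} [Finite X] {f g u v : X → X}
    (hf : f = g ∘ u) (hg : g = f ∘ v) (h : Injective f) : Injective g := by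
  have hvu : ∀ x, v (u x) = x := fun x =>
    h (by rw [← comp_apply (f := f), ← hg, ← comp_apply (f := g), ← hf])
  rw [hg]
  exact h.comp (Finite.injective_iff_surjective.mpr fun x => ⟨u x, hvu x⟩)

/-- For `n ≥ 5`, semigroup endomorphisms `α`, `β` of `T_n` are Green's
L-related iff `α = β` or both are bijective. -/
theorem green_L (n : ℕ) (hn : 5 ≤ n) (α β : (Fin n → Fin n) → (Fin n → Fin n))
    (hα : IsEndo α) (hβ : IsEndo β) :
    (∃ γ δ, IsEndo γ ∧ IsEndo δ ∧
        α = (fun x => β (γ x)) ∧ β = (fun x => α (δ x))) ↔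
      (α = β ∨ (Function.Bijective α ∧ Function.Bijective β)) := by
  constructor
  · rintro ⟨γ, δ, -, -, hαβ, hβα⟩
    by_cases hαi : Injective α
    · exact Or.inr ⟨Finite.injective_iff_bijective.mp hαi,
        Finite.injective_iff_bijective.mp (hαi.of_eq_comp_of_eq_comp hαβ hβα)⟩
    · have hβi : ¬ Injective β := fun hβi => hαi (hβi.of_eq_comp_of_eq_comp hβα hαβ)
      obtain ⟨t, e, hte, rfl⟩ := hα.exists_permissible_eq_phi hn hαi
      obtain ⟨T, E, hTE, rfl⟩ := hβ.exists_permissible_eq_phi hn hβi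
      have hrange : Set.range (phi t e) = Set.range (phi T E) :=
        subset_antisymm (hαβ ▸ Set.range_comp_subset_range γ (phi T E))
          (hβα ▸ Set.range_comp_subset_range δ (phi t e))
      rw [range_phi _ _ (by omega), range_phi _ _ (by omega)] at hrange
      obtain ⟨rfl, rfl⟩ := hte.eq_and_eq_of_insert_eq hTE hrange
      exact Or.inl rfl
  · rintro (rfl | ⟨hαb, hβb⟩)
    · exact ⟨id, id, fun _ _ => rfl, fun _ _ => rfl, rfl, rfl⟩
    · refine ⟨(ofBijective β hβb).symm ∘ α, (ofBijective α hαb).symm ∘ β,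
        (hβ.ofBijective_symm hβb).comp hα, (hα.ofBijective_symm hαb).comp hβ,
        funext fun x => ((ofBijective β hβb).apply_symm_apply (α x)).symm,
        funext fun x => ((ofBijective α hαb).apply_symm_apply (β x)).symm⟩
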